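/- arXiv:1011.3361 — 6 statements merged into one kernel-verified Lean document; each statement's English description precedes it below -/
import Mathlib

section
/- Let T be a balanced tree with k levels (k ≥ 2) and L its graph Laplacian. Then every eigenvalue of the matrix T^{(0)} is an eigenvalue of L. -/
/-!
Rescaling the `l`-th entry of an eigenvector of `T^{(0)}` by `(-1)^l / √n(l)` turns it into an
eigenvector of the tridiagonal matrix `S^{(0)}`, since `S^{(0)} E = E T^{(0)}` for that diagonal
scaling `E`. On functions that are constant on each level, the Laplacian acts exactly as
`S^{(0)}`: a vertex at level `l` has one parent (if `l > 0`) and `c(l)` children (if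
`l < k - 1`), and `d(l)` is the sum of these counts. So the stratified lift of the rescaled
eigenvector, which is nonzero because every level is inhabited, is an eigenfunction of `L`.
-/

open scoped Classical

/-- Vertices of the balanced tree with `k` levels and branching sequence `c`:
a vertex at level `l` (`0 ≤ l ≤ k-1`) is a function assigning to each `i < l` a
label in `Fin (c i)` (the label of the level-`(i+1)` ancestor among its siblings). -/
abbrev BTVert (k : ℕ) (c : ℕ → ℕ) : Type := Σ l : Fin k, ∀ i : Fin l.val, Fin (c i.val)

/-- `p` is the parent of `v` in the balanced tree. -/
def IsParentOf {k : ℕ} {c : ℕ → ℕ} (p v : BTVert k c) : Prop :=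
  ∃ h : p.1.val + 1 = v.1.val,
    ∀ i : Fin p.1.val, v.2 ⟨i.val, by have := i.isLt; omega⟩ = p.2 i

/-- The balanced tree as a simple graph: each non-root vertex is adjacent to its parent. -/
def btGraph (k : ℕ) (c : ℕ → ℕ) : SimpleGraph (BTVert k c) where
  Adj u v := IsParentOf u v ∨ IsParentOf v u
  symm := ⟨fun u v h => h.symm⟩
  loopless := ⟨fun v h => by
    rcases h with ⟨h, -⟩ | ⟨h, -⟩ <;> omega⟩

/-- The root (the unique vertex at level 0). -/
def btRoot (k : ℕ) (c : ℕ → ℕ) (hk : 0 < k) : BTVert k c :=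
  ⟨⟨0, hk⟩, fun i => i.elim0⟩

/-- `u` belongs to the maximal subtree rooted at `v` (`u` is `v` or a descendant of `v`). -/
def InSubtree {k : ℕ} {c : ℕ → ℕ} (v u : BTVert k c) : Prop :=
  ∃ h : v.1.val ≤ u.1.val,
    ∀ i : Fin v.1.val, u.2 ⟨i.val, by have := i.isLt; omega⟩ = v.2 i

/-- A function on the vertices is stratified if it only depends on the level. -/
def Stratified {k : ℕ} {c : ℕ → ℕ} (f : BTVert k c → ℝ) : Prop :=
  ∀ u v : BTVert k c, u.1 = v.1 → f u = f v

/-- Number of vertices at level `l`: `n(l) = c(0) ⋯ c(l-1)`. -/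
def nlev (c : ℕ → ℕ) (l : ℕ) : ℕ := ∏ i ∈ Finset.range l, c i

/-- The common degree `d(l)` of the vertices at level `l`. -/
def branchDeg (k : ℕ) (c : ℕ → ℕ) (l : ℕ) : ℕ :=
  if l = 0 then c 0 else if l = k - 1 then 1 else c l + 1

/-- The symmetric tridiagonal matrix `T^{(l0)}` with diagonal `d(l0), …, d(k-1)` and
off-diagonal `√c(l0), …, √c(k-2)`. -/
noncomputable def matT (k : ℕ) (c : ℕ → ℕ) (l0 : ℕ) :
    Matrix (Fin (k - l0)) (Fin (k - l0)) ℝ := fun i j =>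
  if i = j then (branchDeg k c (l0 + i.val) : ℝ)
  else if i.val + 1 = j.val then Real.sqrt (c (l0 + i.val))
  else if j.val + 1 = i.val then Real.sqrt (c (l0 + j.val))
  else 0

/-- The tridiagonal matrix `S^{(l0)}` with diagonal `d(l0), …, d(k-1)`, subdiagonal
entries `-1` and superdiagonal entries `-c(l0), …, -c(k-2)`. -/
def matS (k : ℕ) (c : ℕ → ℕ) (l0 : ℕ) :
    Matrix (Fin (k - l0)) (Fin (k - l0)) ℝ := fun i j =>
  if i = j then (branchDeg k c (l0 + i.val) : ℝ)
  else if i.val + 1 = j.val then -(c (l0 + i.val) : ℝ)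
  else if j.val + 1 = i.val then -1
  else 0

/-- `lam` is an eigenvalue of the matrix `A`. -/
def IsEigenvalue {V : Type*} [Fintype V] (A : Matrix V V ℝ) (lam : ℝ) : Prop :=
  ∃ f : V → ℝ, f ≠ 0 ∧ A.mulVec f = lam • f

/-- The (geometric) multiplicity of `lam` as an eigenvalue of `A`. -/
noncomputable def eigMult {V : Type*} [Fintype V] (A : Matrix V V ℝ) (lam : ℝ) : ℕ :=
  Module.finrank ℝ
    ↥(LinearMap.ker (A.mulVecLin - lam • (LinearMap.id : (V → ℝ) →ₗ[ℝ] (V → ℝ))))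

/-- The Dirichlet Laplacian on a subset `Ω` of the vertices of the balanced tree:
the principal submatrix of the Laplacian with rows and columns indexed by `Ω`. -/
noncomputable def dirichletLap (k : ℕ) (c : ℕ → ℕ) (Ω : Set (BTVert k c)) :
    Matrix Ω Ω ℝ := fun u v => (btGraph k c).lapMatrix ℝ u.1 v.1


namespace BTVert

variable {k : ℕ} {c : ℕ → ℕ}

theorem ext_label {u w : BTVert k c} (h : u.1 = w.1)
    (hlabel : ∀ i : Fin u.1.val, u.2 i = w.2 (Fin.cast (congrArg Fin.val h) i)) : u = w := by
  obtain ⟨l, a⟩ := u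
  obtain ⟨l', b⟩ := w
  cases h
  exact Sigma.ext rfl (heq_of_eq (funext hlabel))

def parent (v : BTVert k c) : BTVert k c :=
  ⟨⟨v.1.val - 1, by omega⟩, fun i => v.2 (Fin.castLE (Nat.sub_le _ _) i)⟩

def child (v : BTVert k c) (h : v.1.val + 1 < k) (a : Fin (c v.1.val)) : BTVert k c :=
  ⟨⟨v.1.val + 1, h⟩, Fin.snoc (α := fun i => Fin (c i.val)) v.2 a⟩

theorem isParentOf_parent (v : BTVert k c) (h : 0 < v.1.val) : IsParentOf v.parent v :=
  ⟨by simp only [parent]; omega, fun _ => rfl⟩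

theorem _root_.IsParentOf.eq_parent {u v : BTVert k c} (hp : IsParentOf u v) : u = v.parent := by
  obtain ⟨hl, hlabel⟩ := hp
  exact ext_label (Fin.ext (by simp only [parent]; omega)) fun i => (hlabel i).symm

theorem isParentOf_child (v : BTVert k c) (h : v.1.val + 1 < k) (a : Fin (c v.1.val)) :
    IsParentOf v (v.child h a) :=
  ⟨rfl, fun i => Fin.snoc_castSucc (α := fun i => Fin (c i.val)) (p := v.2) (x := a) i⟩

theorem _root_.IsParentOf.exists_eq_child {u v : BTVert k c} (hp : IsParentOf v u) :
    ∃ (h : v.1.val + 1 < k) (a : Fin (c v.1.val)), v.child h a = u := by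
  obtain ⟨hl, hlabel⟩ := hp
  have hu : v.1.val < u.1.val := by omega
  refine ⟨hl ▸ u.1.isLt, u.2 ⟨v.1.val, hu⟩, ext_label (Fin.ext hl) fun i => ?_⟩
  induction i using Fin.lastCases with
  | last => simp only [child, Fin.snoc_last]; rfl
  | cast j => simp only [child, Fin.snoc_castSucc]; exact (hlabel j).symm

theorem child_injective (v : BTVert k c) (h : v.1.val + 1 < k) :
    Function.Injective (v.child h) := by
  intro a b hab
  have := congrFun (eq_of_heq (Sigma.mk.inj hab).2) (Fin.last _)
  simpa only [Fin.snoc_last] using this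

end BTVert

section Neighbors

variable {k : ℕ} {c : ℕ → ℕ}

open Finset

theorem sum_filter_isParentOf_left (v : BTVert k c) (f : ℕ → ℝ) :
    ∑ u ∈ univ.filter (IsParentOf · v), f u.1.val =
      if 0 < v.1.val then f (v.1.val - 1) else 0 := by
  split_ifs with hv
  · have : univ.filter (IsParentOf · v) = {v.parent} := by
      ext u
      simpa using ⟨IsParentOf.eq_parent, fun hu => hu ▸ v.isParentOf_parent hv⟩
    rw [this, sum_singleton]
    rfl
  · refine sum_eq_zero fun u hu => absurd (mem_filter.1 hu).2.1 ?_
    omega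

theorem sum_filter_isParentOf_right (v : BTVert k c) (f : ℕ → ℝ) :
    ∑ u ∈ univ.filter (IsParentOf v ·), f u.1.val =
      if v.1.val + 1 < k then c v.1.val * f (v.1.val + 1) else 0 := by
  split_ifs with hv
  · have : univ.filter (IsParentOf v ·) = univ.image (v.child hv) := by
      ext u
      simpa using
        ⟨fun hu => hu.exists_eq_child.2, fun ⟨a, ha⟩ => ha ▸ v.isParentOf_child hv a⟩
    rw [this, sum_image fun a _ b _ => (v.child_injective hv ·)]
    simp [BTVert.child]
  · refine sum_eq_zero fun u hu => absurd (mem_filter.1 hu).2.1 ?_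
    have := u.1.isLt
    omega

theorem sum_neighborFinset_btGraph (v : BTVert k c) (f : ℕ → ℝ) :
    ∑ u ∈ (btGraph k c).neighborFinset v, f u.1.val =
      (if 0 < v.1.val then f (v.1.val - 1) else 0) +
        if v.1.val + 1 < k then c v.1.val * f (v.1.val + 1) else 0 := by
  have hdisj : Disjoint (univ.filter (IsParentOf · v)) (univ.filter (IsParentOf v ·)) :=
    disjoint_filter.2 fun u _ h₁ h₂ => by have := h₁.1; have := h₂.1; omega
  have hnbr : (btGraph k c).neighborFinset v =
      univ.filter (IsParentOf · v) ∪ univ.filter (IsParentOf v ·) := by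
    rw [SimpleGraph.neighborFinset_eq_filter, ← filter_or]
    exact filter_congr fun u _ => Or.comm
  rw [hnbr, sum_union hdisj, sum_filter_isParentOf_left, sum_filter_isParentOf_right]

theorem btGraph_degree (hk : 2 ≤ k) (v : BTVert k c) :
    (btGraph k c).degree v = branchDeg k c v.1.val := by
  have h := sum_neighborFinset_btGraph v 1
  simp only [Pi.one_apply, sum_const, nsmul_eq_mul, mul_one,
    SimpleGraph.card_neighborFinset_eq_degree] at h
  suffices ((btGraph k c).degree v : ℝ) = branchDeg k c v.1.val by exact_mod_cast this
  have := v.1.isLt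
  rw [h, branchDeg]
  split_ifs <;> first | omega | (push_cast; ring1) | simp_all

end Neighbors

open Matrix

theorem IsEigenvalue.of_mul_eq_mul {m n : Type*} [Fintype m] [Fintype n] {A : Matrix m m ℝ}
    {B : Matrix n n ℝ} {P : Matrix m n ℝ} {lam : ℝ} (hB : IsEigenvalue B lam)
    (hP : Function.Injective P.mulVec) (h : A * P = P * B) : IsEigenvalue A lam := by
  obtain ⟨f, hf0, hf⟩ := hB
  refine ⟨P *ᵥ f, fun h0 => hf0 (hP (h0.trans (mulVec_zero P).symm)), ?_⟩
  rw [mulVec_mulVec, h, ← mulVec_mulVec, hf, mulVec_smul]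

def levelMatrix (k : ℕ) (c : ℕ → ℕ) : Matrix (BTVert k c) (Fin k) ℝ :=
  of fun v l => if v.1 = l then 1 else 0

section LevelMatrix

variable {k : ℕ} {c : ℕ → ℕ}

theorem levelMatrix_mulVec (g : Fin k → ℝ) (v : BTVert k c) :
    (levelMatrix k c *ᵥ g) v = g v.1 := by
  simp [levelMatrix, mulVec, dotProduct]

theorem levelMatrix_mulVec_injective (hc : ∀ l, l + 1 < k → 0 < c l) :
    Function.Injective (levelMatrix k c).mulVec := by
  intro g g' h
  funext l
  have hv := congrFun h ⟨l, fun i => ⟨0, hc i (by omega)⟩⟩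
  simpa only [levelMatrix_mulVec] using hv

theorem lapMatrix_mul_levelMatrix (hk : 2 ≤ k) :
    (btGraph k c).lapMatrix ℝ * levelMatrix k c = levelMatrix k c * matS k c 0 := by
  ext v l
  have hL : ((btGraph k c).lapMatrix ℝ * levelMatrix k c) v l =
      ((btGraph k c).lapMatrix ℝ *ᵥ fun u => if u.1.val = l.val then 1 else 0) v := by
    simp [mul_apply, mulVec, dotProduct, levelMatrix, Fin.ext_iff]
  have hR : (levelMatrix k c * matS k c 0) v l = matS k c 0 v.1 l := by
    simp [mul_apply, levelMatrix]
  rw [hL, hR, SimpleGraph.lapMatrix_mulVec_apply,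
    sum_neighborFinset_btGraph v fun m => if m = l.val then 1 else 0, btGraph_degree hk, matS]
  simp only [Fin.ext_iff, zero_add]
  have := l.isLt
  split_ifs <;> first | omega | simp_all

end LevelMatrix

theorem nlev_succ (c : ℕ → ℕ) (l : ℕ) : nlev c (l + 1) = nlev c l * c l :=
  Finset.prod_range_succ c l

theorem nlev_pos {c : ℕ → ℕ} {l : ℕ} (hc : ∀ i < l, 0 < c i) : 0 < nlev c l :=
  Finset.prod_pos fun i hi => hc i (Finset.mem_range.1 hi)

noncomputable def levelScale (c : ℕ → ℕ) (l : ℕ) : ℝ := (-1) ^ l / √(nlev c l)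

section LevelScale

variable {c : ℕ → ℕ}

theorem levelScale_ne_zero {l : ℕ} (h : 0 < nlev c l) : levelScale c l ≠ 0 :=
  div_ne_zero (pow_ne_zero _ (by norm_num)) (Real.sqrt_ne_zero'.2 (by exact_mod_cast h))

theorem levelScale_succ_mul_sqrt {l : ℕ} (h : 0 < c l) :
    levelScale c (l + 1) * √(c l) = -levelScale c l := by
  have hsqrt : √(c l : ℝ) ≠ 0 := Real.sqrt_ne_zero'.2 (by exact_mod_cast h)
  rw [levelScale, levelScale, nlev_succ, Nat.cast_mul, Real.sqrt_mul (Nat.cast_nonneg _),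
    div_mul_eq_mul_div, mul_div_mul_right _ _ hsqrt, pow_succ, mul_neg_one, neg_div]

theorem matS_mul_diagonal_levelScale {k : ℕ} (hc : ∀ l, l + 1 < k → 0 < c l) (l0 : ℕ) :
    matS k c l0 * diagonal (fun i : Fin (k - l0) => levelScale c (l0 + i)) =
      diagonal (fun i : Fin (k - l0) => levelScale c (l0 + i)) * matT k c l0 := by
  ext i j
  rw [mul_diagonal, diagonal_mul, matS, matT]
  have hi := i.isLt
  have hj := j.isLt
  split_ifs with hij hsucc hpred
  · rw [hij, mul_comm]
  · have h := levelScale_succ_mul_sqrt (hc (l0 + i) (by omega))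
    have hsq := Real.mul_self_sqrt (Nat.cast_nonneg (α := ℝ) (c (l0 + i)))
    rw [← hsucc, ← add_assoc]
    linear_combination (-√(c (l0 + i) : ℝ)) * h + levelScale c (l0 + i + 1) * hsq
  · have h := levelScale_succ_mul_sqrt (hc (l0 + j) (by omega))
    rw [← hpred, ← add_assoc]
    linear_combination -h
  · simp

end LevelScale

/-- every eigenvalue of `T^{(0)}` is an eigenvalue of the Laplacian of the
balanced tree. -/
theorem rojo_full_matrix_eigenvalues (k : ℕ) (hk : 2 ≤ k) (c : ℕ → ℕ)
    (hc : ∀ l, l ≤ k - 2 → 1 ≤ c l) (lam : ℝ)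
    (hlam : IsEigenvalue (matT k c 0) lam) :
    IsEigenvalue ((btGraph k c).lapMatrix ℝ) lam := by
  have hc' : ∀ l, l + 1 < k → 0 < c l := fun l hl => hc l (by omega)
  have hscale : Function.Injective (diagonal fun i : Fin (k - 0) => levelScale c (0 + i)).mulVec :=
    mulVec_injective_iff_isUnit.2 <| isUnit_diagonal.2 <| Pi.isUnit_iff.2 fun i =>
      (levelScale_ne_zero (nlev_pos fun j hj => hc' j (by omega))).isUnit
  exact (hlam.of_mul_eq_mul hscale (matS_mul_diagonal_levelScale hc' 0)).of_mul_eq_mul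
    (levelMatrix_mulVec_injective hc') (lapMatrix_mul_levelMatrix hk)
end

section
/- Let G be a connected finite graph on n vertices and A a generalized Laplacian of G with eigenvalues λ_1 ≤ λ_2 ≤ … ≤ λ_n (listed with multiplicity). Suppose λ_k has multiplicity r, i.e. λ_{k−1} < λ_k = … = λ_{k+r−1} < λ_{k+r}. Then every eigenvector of A with eigenvalue λ_k has at most k + r − 1 sign graphs. -/
open scoped Classical

/-- `A` is a generalized Laplacian of the graph `G`: a real symmetric matrix with
`A u v < 0` when `u` and `v` are adjacent and `A u v = 0` when `u ≠ v` are non-adjacent. -/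
def IsGenLaplacian {V : Type*} [Fintype V] (G : SimpleGraph V) (A : Matrix V V ℝ) : Prop :=
  A.IsSymm ∧ ∀ u v : V, u ≠ v →
    (G.Adj u v → A u v < 0) ∧ (¬ G.Adj u v → A u v = 0)

/-- The number of sign graphs of `f` on `G`: the number of connected components of the
subgraph induced on `{v | f v > 0}` plus the number of connected components of the subgraph
induced on `{v | f v < 0}`. -/
noncomputable def numSignGraphs {V : Type*} (G : SimpleGraph V) (f : V → ℝ) : ℕ :=
  Nat.card (G.induce {v | 0 < f v}).ConnectedComponent +
  Nat.card (G.induce {v | f v < 0}).ConnectedComponent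

/-!
If `f` had more than `K = k + r - 1` sign graphs, the vectors `f|_S`, `S` a sign graph, would
span a space of dimension `> K`. Since `A` has at most `K` eigenvalues `≤ λ`, this space contains
a nonzero `g` orthogonal to all eigenvectors with eigenvalue `≤ λ`, so `gᵀ A g > λ gᵀ g`. But for
`g = ρ f` with `ρ` constant on sign graphs, `λ gᵀ g - gᵀ A g = ½ ∑ A u v f u f v (ρ u - ρ v)²`,
and every term is nonnegative: it vanishes unless `u ~ v` lie in different sign graphs, and then
`f u f v ≤ 0` while `A u v < 0`.
-/

open Finset Matrix

theorem Finset.card_filter_comp_eq_of_forall_card_fiber_eq {ι κ α : Type*} [Fintype ι]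
    [Fintype κ] [DecidableEq α] {a : ι → α} {b : κ → α}
    (h : ∀ t, #{i | a i = t} = #{j | b j = t}) (p : α → Prop) [DecidablePred p] :
    #{i | p (a i)} = #{j | p (b j)} := by
  have hmap : univ.val.map a = univ.val.map b := Multiset.ext.mpr fun t => by
    simp only [Multiset.count_map, eq_comm (a := t)]
    exact h t
  calc #{i | p (a i)} = Multiset.card ((univ.val.map a).filter p) := by
        rw [Multiset.filter_map, Multiset.card_map]; rfl
    _ = #{j | p (b j)} := by
        rw [hmap, Multiset.filter_map, Multiset.card_map]; rfl

theorem Fin.card_filter_le_le_of_lt {α : Type*} [LinearOrder α] {m K : ℕ} {μ : Fin m → α} {lam : α}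
    (h : ∀ i : Fin m, K ≤ i → lam < μ i) : #{i | μ i ≤ lam} ≤ K :=
  calc #{i | μ i ≤ lam} ≤ #{i : Fin m | i < K} :=
        card_le_card fun i => by simpa using fun hi => not_le.mp fun hK => (h i hK).not_ge hi
    _ ≤ K := by rw [Fin.card_filter_val_lt]; exact min_le_right _ _

namespace Matrix.IsHermitian

variable {n : Type*} [Fintype n] [DecidableEq n] {A : Matrix n n ℝ} (hA : A.IsHermitian)

theorem finrank_ker_eq_card_eigenvalues (t : ℝ) :
    Module.finrank ℝ (LinearMap.ker (A.mulVecLin - t • LinearMap.id)) =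
      #{i | hA.eigenvalues i = t} := by
  let e := WithLp.linearEquiv 2 ℝ (n → ℝ)
  have hconj : Module.End.eigenspace (toEuclideanLin A) t =
      (LinearMap.ker (A.mulVecLin - t • LinearMap.id)).map e.symm.toLinearMap := by
    rw [← Submodule.comap_equiv_eq_map_symm]
    ext x
    simp [e, sub_eq_zero, WithLp.ext_iff]
  rw [← LinearEquiv.finrank_map_eq e.symm, ← hconj,
    ← (isSymmetric_toEuclideanLin_iff.mpr hA).card_filter_eigenvalues_eq finrank_euclideanSpace t]
  refine Finset.card_equiv (Fintype.equivOfCardEq (Fintype.card_fin _)) fun i => ?_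
  simp only [Finset.mem_filter, Finset.mem_univ, true_and]
  simp [eigenvalues, eigenvalues₀]

theorem sum_sq_dotProduct_eigenvectorBasis (g : n → ℝ) :
    ∑ i, (⇑(hA.eigenvectorBasis i) ⬝ᵥ g) ^ 2 = g ⬝ᵥ g := by
  have := hA.eigenvectorBasis.sum_inner_mul_inner (WithLp.toLp 2 g) (WithLp.toLp 2 g)
  simp_rw [EuclideanSpace.inner_eq_star_dotProduct] at this
  simpa [sq, dotProduct_comm] using this

theorem eigenvectorBasis_dotProduct_mulVec (i : n) (g : n → ℝ) :
    ⇑(hA.eigenvectorBasis i) ⬝ᵥ A *ᵥ g = hA.eigenvalues i * (⇑(hA.eigenvectorBasis i) ⬝ᵥ g) := by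
  rw [dotProduct_mulVec, ← mulVec_transpose, isHermitian_iff_isSymm.mp hA,
    mulVec_eigenvectorBasis, smul_dotProduct, smul_eq_mul]

theorem sum_eigenvalues_mul_sq_dotProduct_eigenvectorBasis (g : n → ℝ) :
    ∑ i, hA.eigenvalues i * (⇑(hA.eigenvectorBasis i) ⬝ᵥ g) ^ 2 = g ⬝ᵥ A *ᵥ g := by
  have := hA.eigenvectorBasis.sum_inner_mul_inner (WithLp.toLp 2 g) (WithLp.toLp 2 (A *ᵥ g))
  simp_rw [EuclideanSpace.inner_eq_star_dotProduct] at this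
  simp only [star_trivial] at this
  rw [dotProduct_comm g, ← this]
  refine Finset.sum_congr rfl fun i _ => ?_
  rw [dotProduct_comm (A *ᵥ g), eigenvectorBasis_dotProduct_mulVec]
  ring

theorem exists_mem_ne_zero_lt_dotProduct_mulVec (W : Submodule ℝ (n → ℝ)) (lam : ℝ)
    (hW : #{i | hA.eigenvalues i ≤ lam} < Module.finrank ℝ W) :
    ∃ g ∈ W, g ≠ 0 ∧ lam * (g ⬝ᵥ g) < g ⬝ᵥ A *ᵥ g := by
  let D := (Matrix.of fun i : {i // hA.eigenvalues i ≤ lam} => ⇑(hA.eigenvectorBasis i)).mulVecLin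
    ∘ₗ W.subtype
  have hD : LinearMap.ker D ≠ ⊥ := LinearMap.ker_ne_bot_of_finrank_lt <| by
    rwa [Module.finrank_fintype_fun_eq_card, Fintype.card_subtype]
  obtain ⟨⟨g, hgW⟩, hgD, hg0⟩ := Submodule.exists_mem_ne_zero_of_ne_bot hD
  have hlow : ∀ i, hA.eigenvalues i ≤ lam → ⇑(hA.eigenvectorBasis i) ⬝ᵥ g = 0 :=
    fun i hi => congrFun hgD ⟨i, hi⟩
  obtain ⟨j, hj⟩ : ∃ j, ⇑(hA.eigenvectorBasis j) ⬝ᵥ g ≠ 0 := by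
    by_contra! h
    refine hg0 (Subtype.ext (dotProduct_self_eq_zero.mp ?_))
    simp [← hA.sum_sq_dotProduct_eigenvectorBasis, h]
  refine ⟨g, hgW, fun h => hg0 (Subtype.ext h), ?_⟩
  rw [← hA.sum_sq_dotProduct_eigenvectorBasis,
    ← hA.sum_eigenvalues_mul_sq_dotProduct_eigenvectorBasis, mul_sum]
  refine Finset.sum_lt_sum (fun i _ => ?_) ⟨j, mem_univ j, ?_⟩
  · rcases le_or_gt (hA.eigenvalues i) lam with hi | hi
    · simp [hlow i hi]
    · exact mul_le_mul_of_nonneg_right hi.le (sq_nonneg _)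
  · have hj' : lam < hA.eigenvalues j := not_le.mp fun h => hj (hlow j h)
    exact mul_lt_mul_of_pos_right hj' (by positivity)

end Matrix.IsHermitian

theorem Matrix.IsSymm.mul_dotProduct_mulVec_mul_eq {V : Type*} [Fintype V] {A : Matrix V V ℝ}
    (hA : A.IsSymm) {f : V → ℝ} {lam : ℝ} (hf : A *ᵥ f = lam • f) (ρ : V → ℝ) :
    lam * ((ρ * f) ⬝ᵥ (ρ * f)) - (ρ * f) ⬝ᵥ A *ᵥ (ρ * f) =
      (∑ u, ∑ v, A u v * f u * f v * (ρ u - ρ v) ^ 2) / 2 := by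
  have hrow : ∀ u, lam * f u = ∑ v, A u v * f v := fun u => by
    simpa [mulVec, dotProduct] using (congrFun hf u).symm
  have hhalf : lam * ((ρ * f) ⬝ᵥ (ρ * f)) - (ρ * f) ⬝ᵥ A *ᵥ (ρ * f) =
      ∑ u, ∑ v, A u v * f u * f v * (ρ u * (ρ u - ρ v)) := by
    simp only [dotProduct, mulVec, Pi.mul_apply, mul_sum, ← sum_sub_distrib]
    refine sum_congr rfl fun u _ => ?_
    rw [show lam * (ρ u * f u * (ρ u * f u)) = ρ u * ρ u * f u * (lam * f u) by ring, hrow,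
      mul_sum, ← sum_sub_distrib]
    exact sum_congr rfl fun v _ => by ring
  have hswap : ∑ u, ∑ v, A u v * f u * f v * (ρ u * (ρ u - ρ v)) =
      ∑ u, ∑ v, A u v * f u * f v * (ρ v * (ρ v - ρ u)) := by
    rw [sum_comm]
    refine sum_congr rfl fun u _ => sum_congr rfl fun v _ => ?_
    rw [hA.apply v u]
    ring
  have hsum : ∑ u, ∑ v, A u v * f u * f v * (ρ u - ρ v) ^ 2 =
      ∑ u, ∑ v, A u v * f u * f v * (ρ u * (ρ u - ρ v)) +
        ∑ u, ∑ v, A u v * f u * f v * (ρ v * (ρ v - ρ u)) := by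
    rw [← sum_add_distrib]
    refine sum_congr rfl fun u _ => ?_
    rw [← sum_add_distrib]
    exact sum_congr rfl fun v _ => by ring
  rw [hsum, ← hswap, hhalf]
  ring

abbrev SignGraph {V : Type*} (G : SimpleGraph V) (f : V → ℝ) : Type _ :=
  (G.induce {v | 0 < f v}).ConnectedComponent ⊕ (G.induce {v | f v < 0}).ConnectedComponent

theorem numSignGraphs_eq_nat_card {V : Type*} [Finite V] (G : SimpleGraph V) (f : V → ℝ) :
    numSignGraphs G f = Nat.card (SignGraph G f) := by
  rw [numSignGraphs, Nat.card_sum]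

namespace SignGraph

variable {V : Type*} {G : SimpleGraph V} {f : V → ℝ}

noncomputable def spread (G : SimpleGraph V) (f : V → ℝ) : (SignGraph G f → ℝ) →ₗ[ℝ] V → ℝ :=
  LinearMap.pi fun v =>
    if h : 0 < f v then LinearMap.proj (.inl ((G.induce _).connectedComponentMk ⟨v, h⟩))
    else if h : f v < 0 then LinearMap.proj (.inr ((G.induce _).connectedComponentMk ⟨v, h⟩))
    else 0

theorem spread_apply_of_pos (a : SignGraph G f → ℝ) {v : V} (h : 0 < f v) :
    spread G f a v = a (.inl ((G.induce _).connectedComponentMk ⟨v, h⟩)) := by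
  simp [spread, h]

theorem spread_apply_of_neg (a : SignGraph G f → ℝ) {v : V} (h : f v < 0) :
    spread G f a v = a (.inr ((G.induce _).connectedComponentMk ⟨v, h⟩)) := by
  simp [spread, h, h.not_gt]

theorem spread_apply_eq_of_adj (a : SignGraph G f → ℝ) {u v : V} (huv : G.Adj u v)
    (hf : 0 < f u * f v) : spread G f a u = spread G f a v := by
  have hreach {s : Set V} (hu : u ∈ s) (hv : v ∈ s) :
      (G.induce s).connectedComponentMk ⟨u, hu⟩ = (G.induce s).connectedComponentMk ⟨v, hv⟩ :=
    SimpleGraph.ConnectedComponent.sound (SimpleGraph.Adj.reachable (by simpa using huv))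
  rcases mul_pos_iff.mp hf with ⟨hu, hv⟩ | ⟨hu, hv⟩
  · rw [spread_apply_of_pos a hu, spread_apply_of_pos a hv, hreach]
  · rw [spread_apply_of_neg a hu, spread_apply_of_neg a hv, hreach]

/-- `restrictSum G f a = ∑ S, a S • f|_S`, the sum running over the sign graphs `S` of `f`. -/
noncomputable def restrictSum (G : SimpleGraph V) (f : V → ℝ) : (SignGraph G f → ℝ) →ₗ[ℝ] V → ℝ :=
  LinearMap.mulRight ℝ f ∘ₗ spread G f

theorem restrictSum_apply (a : SignGraph G f → ℝ) : restrictSum G f a = spread G f a * f := rfl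

theorem restrictSum_injective : Function.Injective (restrictSum G f) := by
  refine (injective_iff_map_eq_zero _).mpr fun a ha => funext fun s => ?_
  rcases s with c | c
  · induction c using SimpleGraph.ConnectedComponent.ind with | h x =>
    have hx : 0 < f x := x.2
    simpa [restrictSum_apply, spread_apply_of_pos a hx, hx.ne'] using congrFun ha x
  · induction c using SimpleGraph.ConnectedComponent.ind with | h x =>
    have hx : f x < 0 := x.2
    simpa [restrictSum_apply, spread_apply_of_neg a hx, hx.ne] using congrFun ha x

end SignGraph

theorem IsGenLaplacian.mul_dotProduct_mulVec_mul_le {V : Type*} [Fintype V] {G : SimpleGraph V}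
    {A : Matrix V V ℝ} (hA : IsGenLaplacian G A) {f : V → ℝ} {lam : ℝ} (hf : A *ᵥ f = lam • f)
    {ρ : V → ℝ} (hρ : ∀ u v, G.Adj u v → 0 < f u * f v → ρ u = ρ v) :
    (ρ * f) ⬝ᵥ A *ᵥ (ρ * f) ≤ lam * ((ρ * f) ⬝ᵥ (ρ * f)) := by
  have hterm : ∀ u v, 0 ≤ A u v * f u * f v * (ρ u - ρ v) ^ 2 := by
    intro u v
    rcases eq_or_ne u v with rfl | huv
    · simp
    by_cases hadj : G.Adj u v
    · by_cases hsame : 0 < f u * f v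
      · simp [hρ u v hadj hsame]
      · rw [mul_assoc (A u v)]
        exact mul_nonneg (mul_nonneg_of_nonpos_of_nonpos ((hA.2 u v huv).1 hadj).le
          (not_lt.mp hsame)) (sq_nonneg _)
    · simp [(hA.2 u v huv).2 hadj]
  have hid := hA.1.mul_dotProduct_mulVec_mul_eq hf ρ
  have hnonneg := sum_nonneg fun u (_ : u ∈ univ) => sum_nonneg fun v (_ : v ∈ univ) => hterm u v
  linarith

theorem courant_nodal_domain_bound_general {V : Type*} [Fintype V] (G : SimpleGraph V)
    (A : Matrix V V ℝ) (hA : IsGenLaplacian G A)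
    (μ : Fin (Fintype.card V) → ℝ)
    (henum : ∀ t : ℝ, eigMult A t = (Finset.univ.filter fun i => μ i = t).card)
    (lam : ℝ) (k r : ℕ)
    (hpos : ∀ i : Fin (Fintype.card V),
      (i.val + 1 < k → μ i < lam) ∧
      (k ≤ i.val + 1 → i.val + 1 ≤ k + r - 1 → μ i = lam) ∧
      (k + r - 1 < i.val + 1 → lam < μ i))
    (f : V → ℝ) (hf : A.mulVec f = lam • f) :
    numSignGraphs G f ≤ k + r - 1 := by
  have hH : A.IsHermitian := isHermitian_iff_isSymm.mpr hA.1
  have hcount : #{i | hH.eigenvalues i ≤ lam} ≤ k + r - 1 := by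
    refine (card_filter_comp_eq_of_forall_card_fiber_eq (a := hH.eigenvalues) (b := μ)
      (fun t => ?_) (· ≤ lam)).trans_le
      (Fin.card_filter_le_le_of_lt fun i hi => (hpos i).2.2 (by omega))
    rw [← hH.finrank_ker_eq_card_eigenvalues, ← henum, eigMult]
  by_contra! hcon
  obtain ⟨_, ⟨a, rfl⟩, -, hlt⟩ := hH.exists_mem_ne_zero_lt_dotProduct_mulVec
    (LinearMap.range (SignGraph.restrictSum G f)) lam <| by
      rw [LinearMap.finrank_range_of_inj SignGraph.restrictSum_injective, Module.finrank_pi,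
        ← Nat.card_eq_fintype_card, ← numSignGraphs_eq_nat_card]
      omega
  exact (hA.mul_dotProduct_mulVec_mul_le hf fun _ _ => SignGraph.spread_apply_eq_of_adj a).not_gt
    hlt

/-- discrete Courant nodal domain theorem. If `μ` lists the eigenvalues of a
generalized Laplacian `A` of a connected graph `G` in nondecreasing order with multiplicity,
and `λ_{k-1} < λ_k = ⋯ = λ_{k+r-1} < λ_{k+r}` (1-based positions), then any eigenvector of
`A` with eigenvalue `λ_k` has at most `k + r - 1` sign graphs. -/
theorem courant_nodal_domain_bound {V : Type*} [Fintype V] (G : SimpleGraph V)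
    (hG : G.Connected) (A : Matrix V V ℝ) (hA : IsGenLaplacian G A)
    (μ : Fin (Fintype.card V) → ℝ) (hmono : Monotone μ)
    (henum : ∀ t : ℝ, eigMult A t = (Finset.univ.filter fun i => μ i = t).card)
    (lam : ℝ) (k r : ℕ) (hk : 1 ≤ k) (hr : 1 ≤ r) (hkr : k + r - 1 ≤ Fintype.card V)
    (hpos : ∀ i : Fin (Fintype.card V),
      (i.val + 1 < k → μ i < lam) ∧
      (k ≤ i.val + 1 → i.val + 1 ≤ k + r - 1 → μ i = lam) ∧
      (k + r - 1 < i.val + 1 → lam < μ i))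
    (f : V → ℝ) (hf0 : f ≠ 0) (hf : A.mulVec f = lam • f) :
    numSignGraphs G f ≤ k + r - 1 :=
  courant_nodal_domain_bound_general G A hA μ henum lam k r hpos f hf
end

section
/- Let T be a finite tree and A a generalized Laplacian of T. Let λ be an eigenvalue of A such that every eigenvector of A with eigenvalue λ vanishes at some vertex. Then there exists a vertex at which every eigenvector of A with eigenvalue λ vanishes. -/
open scoped Classical

/-- Bıyıkoğlu: on a tree, if every eigenvector of a generalized Laplacian `A`
with eigenvalue `λ` vanishes at some vertex, then the `λ`-eigenvectors have a common
vanishing vertex. -/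
theorem biyikoglu_common_vanishing (V : Type*) [Fintype V] (G : SimpleGraph V)
    (hT : G.IsTree) (A : Matrix V V ℝ) (hA : IsGenLaplacian G A) (lam : ℝ)
    (hlam : IsEigenvalue A lam)
    (hvan : ∀ f : V → ℝ, f ≠ 0 → A.mulVec f = lam • f → ∃ v : V, f v = 0) :
    ∃ v : V, ∀ f : V → ℝ, f ≠ 0 → A.mulVec f = lam • f → f v = 0 := by
  -- Let E be the eigenspace.
  set E : Submodule ℝ (V → ℝ) :=
    LinearMap.ker (A.mulVecLin - lam • (LinearMap.id : (V → ℝ) →ₗ[ℝ] (V → ℝ))) with hE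
  have hmem : ∀ f : V → ℝ, f ∈ E ↔ A.mulVec f = lam • f := by
    intro f
    simp only [hE, LinearMap.mem_ker, LinearMap.sub_apply, LinearMap.smul_apply,
      LinearMap.id_apply, Matrix.mulVecLin_apply, sub_eq_zero]
  -- V is nonempty
  obtain ⟨f0, hf0, hf0eig⟩ := hlam
  haveI : Nonempty V := by
    by_contra h
    exact hf0 (funext fun v => absurd ⟨v⟩ h)
  -- subspaces of E: vanishing at v
  let p : V → Subspace ℝ E := fun v =>
    LinearMap.ker ((LinearMap.proj v : (V → ℝ) →ₗ[ℝ] ℝ).comp E.subtype)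
  have hcov : ⋃ v, ((p v : Set E)) = Set.univ := by
    ext f
    simp only [Set.mem_iUnion, Set.mem_univ, iff_true, SetLike.mem_coe, p,
      LinearMap.mem_ker, LinearMap.comp_apply, Submodule.subtype_apply, LinearMap.proj_apply]
    by_cases hf : (f : V → ℝ) = 0
    · exact ⟨Classical.arbitrary V, by rw [hf]; rfl⟩
    · obtain ⟨v, hv⟩ := hvan f hf ((hmem f).mp f.2)
      exact ⟨v, hv⟩
  obtain ⟨v, hv⟩ := Subspace.exists_eq_top_of_iUnion_eq_univ hcov
  refine ⟨v, fun f hf hfeig => ?_⟩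
  have h2 : (⟨f, (hmem f).mpr hfeig⟩ : E) ∈ p v := hv ▸ Submodule.mem_top
  simpa [p] using h2
end

section
/- Let T be a finite tree and A a generalized Laplacian of T. Let λ be an eigenvalue of A such that every eigenvector of A with eigenvalue λ vanishes at some vertex, and let Z be the set of vertices at which all eigenvectors of A with eigenvalue λ vanish. Let T_1, …, T_m be the connected components of the forest obtained by deleting Z from T, and let A_1, …, A_m be the principal submatrices of A indexed by the vertex sets of T_1, …, T_m. Then for each i = 1, …, m, λ is a simple eigenvalue of A_i and A_i has an eigenvector with eigenvalue λ that is nonzero at every vertex of T_i. -/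
open scoped Classical

/-!
Fix a `λ`-eigenvector `f` of `A` that is nonzero at every vertex outside `Z` (a generic element
of the eigenspace, since a real vector space is not a finite union of proper subspaces). Its
restriction to a component `C` of `T - Z` is a `λ`-eigenvector of `A_C`, because the neighbours
of `C` outside `C` lie in `Z`, where `f` vanishes. For any two `λ`-eigenvectors `f, g` of a
generalized Laplacian of a tree, the flow `A x y (f x g y - g x f y)` is antisymmetric, supported
on edges and divergence free, hence zero; so `f x g y = g x f y` on every edge. As `f` vanishes
nowhere on the tree `C`, the ratio `g / f` is constant, and `λ` is a simple eigenvalue of `A_C`.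
-/

open Matrix

namespace Submodule

theorem exists_mem_forall_apply_ne_zero {K ι : Type*} [Field K] [Infinite K] [Finite ι]
    (W : Submodule K (ι → K)) : ∃ f ∈ W, ∀ i, (∃ g ∈ W, g i ≠ 0) → f i ≠ 0 := by
  let s : Set ι := {i | ∃ g ∈ W, g i ≠ 0}
  let vanishingAt (i : s) : Subspace K W := LinearMap.ker ((LinearMap.proj i.1).comp W.subtype)
  have hcover : ⋃ i, (vanishingAt i : Set W) ≠ Set.univ := by
    intro hcover
    obtain ⟨⟨i, g, hgW, hgi⟩, htop⟩ := Subspace.exists_eq_top_of_iUnion_eq_univ hcover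
    exact hgi (by simpa [vanishingAt] using htop.ge (Submodule.mem_top (x := ⟨g, hgW⟩)))
  obtain ⟨⟨f, hfW⟩, hf⟩ := (Set.ne_univ_iff_exists_notMem _).mp hcover
  simp only [Set.mem_iUnion, not_exists] at hf
  exact ⟨f, hfW, fun i hi => by simpa [vanishingAt] using hf ⟨i, hi⟩⟩

end Submodule

theorem Finset.sum_sum_compl_eq_sum_sum_of_antisymm {V M : Type*} [Fintype V] [AddCommGroup M]
    [IsAddTorsionFree M] {D : V → V → M} (hanti : ∀ x y, D x y = -D y x) (S : Finset V) :
    ∑ x ∈ S, ∑ y ∈ Sᶜ, D x y = ∑ x ∈ S, ∑ y, D x y := by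
  have hinner : ∑ x ∈ S, ∑ y ∈ S, D x y = 0 := by
    refine self_eq_neg.mp ?_
    calc ∑ x ∈ S, ∑ y ∈ S, D x y = ∑ y ∈ S, ∑ x ∈ S, D x y := Finset.sum_comm
      _ = ∑ y ∈ S, ∑ x ∈ S, -D y x :=
        Finset.sum_congr rfl fun _ _ => Finset.sum_congr rfl fun _ _ => hanti _ _
      _ = -∑ x ∈ S, ∑ y ∈ S, D x y := by simp only [Finset.sum_neg_distrib]
  simp only [← Finset.sum_add_sum_compl S (D _), Finset.sum_add_distrib, hinner, zero_add]

theorem SimpleGraph.IsAcyclic.flow_eq_zero {V M : Type*} [Fintype V] [AddCommGroup M]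
    [IsAddTorsionFree M] {G : SimpleGraph V} (hG : G.IsAcyclic) {D : V → V → M}
    (hanti : ∀ x y, D x y = -D y x)
    (hsupp : ∀ x y, ¬ G.Adj x y → D x y = 0) (hdiv : ∀ x, ∑ y, D x y = 0) (a b : V) :
    D a b = 0 := by
  by_cases hab : G.Adj a b
  case neg => exact hsupp a b hab
  -- Cut along the bridge `ab`: the net flow out of the side `S` of `a` is `D a b`.
  have hbridge :=
    SimpleGraph.isBridge_iff.mp (SimpleGraph.isAcyclic_iff_forall_adj_isBridge.mp hG hab)
  let S : Finset V := {x | (G.deleteEdges {s(a, b)}).Reachable a x}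
  have haS : a ∈ S := by simp [S]
  have hbS : b ∉ S := by simpa [S] using hbridge
  have hcross : ∀ x ∈ S, ∀ y ∉ S, D x y ≠ 0 → x = a ∧ y = b := by
    intro x hx y hy hD
    have hxy : G.Adj x y := by_contra fun h => hD (hsupp x y h)
    by_cases he : s(x, y) = s(a, b)
    · rcases Sym2.eq_iff.mp he with ⟨rfl, rfl⟩ | ⟨rfl, rfl⟩
      · exact ⟨rfl, rfl⟩
      · exact absurd hx hbS
    · refine absurd ?_ hy
      simp only [S, Finset.mem_filter, Finset.mem_univ, true_and] at hx ⊢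
      exact hx.trans (SimpleGraph.deleteEdges_adj.mpr ⟨hxy, he⟩).reachable
  have hcut : ∑ x ∈ S, ∑ y ∈ Sᶜ, D x y = D a b := by
    rw [Finset.sum_eq_single_of_mem a haS, Finset.sum_eq_single_of_mem b (by simpa using hbS)]
    · exact fun y hy hyb => by_contra fun h => hyb (hcross a haS y (by simpa using hy) h).2
    · exact fun x hx hxa => Finset.sum_eq_zero fun y hy =>
        by_contra fun h => hxa (hcross x hx y (by simpa using hy) h).1
  rw [← hcut, Finset.sum_sum_compl_eq_sum_sum_of_antisymm hanti]
  exact Finset.sum_eq_zero fun x _ => hdiv x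

theorem SimpleGraph.Reachable.eq_of_forall_adj {V α : Type*} {G : SimpleGraph V} {r : V → α}
    (h : ∀ x y, G.Adj x y → r x = r y) {u v : V} (huv : G.Reachable u v) : r u = r v := by
  rw [SimpleGraph.reachable_iff_reflTransGen] at huv
  induction huv with
  | refl => rfl
  | tail _ hadj ih => exact ih.trans (h _ _ hadj)

theorem SimpleGraph.Connected.exists_eq_smul_of_mul_eq_mul {V : Type*} {G : SimpleGraph V}
    (hG : G.Connected) {f g : V → ℝ} (hf : ∀ x, f x ≠ 0)
    (hfg : ∀ x y, G.Adj x y → f x * g y = g x * f y) : ∃ c : ℝ, g = c • f := by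
  obtain ⟨x₀⟩ := hG.nonempty
  have hratio : ∀ x y, G.Adj x y → g x / f x = g y / f y := fun x y hxy => by
    rw [div_eq_div_iff (hf x) (hf y)]
    linarith [hfg x y hxy]
  refine ⟨g x₀ / f x₀, funext fun x => ?_⟩
  rw [Pi.smul_apply, smul_eq_mul, (hG x₀ x).eq_of_forall_adj hratio, div_mul_cancel₀ _ (hf x)]

theorem Matrix.mem_ker_mulVecLin_sub_smul_iff {V R : Type*} [Fintype V] [CommRing R]
    {A : Matrix V V R} {lam : R} {f : V → R} :
    f ∈ LinearMap.ker (A.mulVecLin - lam • LinearMap.id) ↔ A *ᵥ f = lam • f := by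
  simp [sub_eq_zero]

theorem eigMult_eq_one_of_forall_eq_smul {V : Type*} [Fintype V] {A : Matrix V V ℝ} {lam : ℝ}
    {f : V → ℝ} (hf : A *ᵥ f = lam • f) (hf0 : f ≠ 0)
    (hall : ∀ g : V → ℝ, A *ᵥ g = lam • g → ∃ c : ℝ, g = c • f) : eigMult A lam = 1 := by
  unfold eigMult
  refine (finrank_eq_one_iff_of_nonzero' ⟨f, Matrix.mem_ker_mulVecLin_sub_smul_iff.mpr hf⟩
    (by simpa using hf0)).mpr fun ⟨g, hg⟩ => ?_
  obtain ⟨c, rfl⟩ := hall g (Matrix.mem_ker_mulVecLin_sub_smul_iff.mp hg)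
  exact ⟨c, rfl⟩

theorem Matrix.submatrix_mulVec_comp {V W R : Type*} [Fintype V] [Fintype W]
    [NonUnitalNonAssocSemiring R] (A : Matrix V V R) {e : W → V} (he : Function.Injective e)
    {f : V → R}
    (hout : ∀ w, ∀ y ∉ Set.range e, A (e w) y * f y = 0) :
    A.submatrix e e *ᵥ (f ∘ e) = (A *ᵥ f) ∘ e :=
  funext fun w => Fintype.sum_of_injective e he _ _ (hout w) fun _ => rfl

namespace IsGenLaplacian

variable {V : Type*} [Fintype V] {G : SimpleGraph V} {A : Matrix V V ℝ}

theorem submatrix {W : Type*} [Fintype W] (hA : IsGenLaplacian G A) {e : W → V}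
    (he : Function.Injective e) : IsGenLaplacian (G.comap e) (A.submatrix e e) :=
  ⟨hA.1.submatrix e, fun u v huv => hA.2 (e u) (e v) (he.ne huv)⟩

theorem mul_eq_mul_of_adj (hG : G.IsAcyclic) (hA : IsGenLaplacian G A) {lam : ℝ}
    {f g : V → ℝ} (hf : A *ᵥ f = lam • f) (hg : A *ᵥ g = lam • g) {x y : V} (hxy : G.Adj x y) :
    f x * g y = g x * f y := by
  -- The flow `A x y (f x g y - g x f y)` has divergence `f x (A g) x - g x (A f) x = 0`.
  have hflow := hG.flow_eq_zero (D := fun x y => A x y * (f x * g y - g x * f y))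
    (fun x y => by rw [hA.1.apply x y]; ring)
    (fun x y hxy => by
      by_cases h : x = y
      · subst h; ring
      · simp [(hA.2 x y h).2 hxy])
    (fun x => by
      have hfx := congrFun hf x
      have hgx := congrFun hg x
      simp only [mulVec, dotProduct, Pi.smul_apply, smul_eq_mul] at hfx hgx
      simp only [mul_sub, Finset.sum_sub_distrib]
      simp only [mul_left_comm (A x _), ← Finset.mul_sum, hfx, hgx]
      ring) x y
  have hA0 : A x y ≠ 0 := ((hA.2 x y hxy.ne).1 hxy).ne
  linarith [(mul_eq_zero.mp hflow).resolve_left hA0]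

theorem eigMult_eq_one (hT : G.IsTree) (hA : IsGenLaplacian G A) {lam : ℝ} {f : V → ℝ}
    (hf : A *ᵥ f = lam • f) (hf0 : ∀ x, f x ≠ 0) : eigMult A lam = 1 := by
  obtain ⟨x₀⟩ := hT.1.nonempty
  refine eigMult_eq_one_of_forall_eq_smul hf (fun h => hf0 x₀ (congrFun h x₀)) fun g hg => ?_
  exact hT.1.exists_eq_smul_of_mul_eq_mul hf0 fun x y hxy =>
    hA.mul_eq_mul_of_adj hT.2 hf hg hxy

end IsGenLaplacian

theorem biyikoglu_components_general (V : Type*) [Fintype V] (G : SimpleGraph V)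
    (hT : G.IsTree) (A : Matrix V V ℝ) (hA : IsGenLaplacian G A) (lam : ℝ)
    (Z : Set V)
    (hZ : Z = {v : V | ∀ f : V → ℝ, f ≠ 0 → A.mulVec f = lam • f → f v = 0}) :
    ∀ C : (G.induce Zᶜ).ConnectedComponent,
      eigMult (fun a b : C.supp => A a.1.1 b.1.1) lam = 1 ∧
      ∃ g : C.supp → ℝ,
        Matrix.mulVec (fun a b : C.supp => A a.1.1 b.1.1) g = lam • g ∧
        ∀ x : C.supp, g x ≠ 0 := by
  intro C
  obtain ⟨f, hfW, hf⟩ :=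
    (LinearMap.ker (A.mulVecLin - lam • LinearMap.id)).exists_mem_forall_apply_ne_zero
  simp only [Matrix.mem_ker_mulVecLin_sub_smul_iff] at hfW hf
  have hfZ : ∀ v ∈ Z, f v = 0 := fun v hv => by
    by_cases h : f = 0
    · simp [h]
    · exact (hZ ▸ hv : _) f h hfW
  have hf0 : ∀ v ∉ Z, f v ≠ 0 := fun v hv => by
    simp only [hZ, Set.mem_ofPred_eq, not_forall] at hv
    obtain ⟨g, -, hg, hgv⟩ := hv
    exact hf v ⟨g, hg, hgv⟩
  let e : C.supp → V := fun a => a.1.1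
  have he : Function.Injective e := fun a b h => Subtype.ext (Subtype.ext h)
  -- Outside `Z`, the only neighbours of a vertex of `C` lie in `C`.
  have hout : ∀ a, ∀ y ∉ Set.range e, A (e a) y * f y = 0 := fun a y hy => by
    by_cases hyZ : y ∈ Z
    · simp [hfZ y hyZ]
    refine mul_eq_zero_of_left ((hA.2 _ _ fun h => hy ⟨a, h⟩).2 fun hadj => hy ?_) _
    exact ⟨⟨⟨y, hyZ⟩, C.mem_supp_of_adj_mem_supp a.2 (show G.Adj (e a) y from hadj)⟩, rfl⟩
  have hfC : A.submatrix e e *ᵥ (f ∘ e) = lam • (f ∘ e) := by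
    rw [A.submatrix_mulVec_comp he hout, hfW]; rfl
  have hfC0 : ∀ a, (f ∘ e) a ≠ 0 := fun a => hf0 _ a.1.2
  have hCtree : (G.comap e).IsTree := (hT.2.induce Zᶜ).isTree_connectedComponent C
  exact ⟨(hA.submatrix he).eigMult_eq_one hCtree hfC hfC0, f ∘ e, hfC, hfC0⟩

/-- Bıyıkoğlu: with `Z` the common vanishing set of the `λ`-eigenvectors of a
generalized Laplacian of a tree, on each connected component of `T - Z` the corresponding
principal submatrix of `A` has `λ` as a simple eigenvalue, with an eigenvector that is
nonzero at every vertex of the component. -/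
theorem biyikoglu_components (V : Type*) [Fintype V] (G : SimpleGraph V)
    (hT : G.IsTree) (A : Matrix V V ℝ) (hA : IsGenLaplacian G A) (lam : ℝ)
    (hlam : IsEigenvalue A lam)
    (hvan : ∀ f : V → ℝ, f ≠ 0 → A.mulVec f = lam • f → ∃ v : V, f v = 0)
    (Z : Set V)
    (hZ : Z = {v : V | ∀ f : V → ℝ, f ≠ 0 → A.mulVec f = lam • f → f v = 0}) :
    ∀ C : (G.induce Zᶜ).ConnectedComponent,
      eigMult (fun a b : C.supp => A a.1.1 b.1.1) lam = 1 ∧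
      ∃ g : C.supp → ℝ,
        Matrix.mulVec (fun a b : C.supp => A a.1.1 b.1.1) g = lam • g ∧
        ∀ x : C.supp, g x ≠ 0 :=
  biyikoglu_components_general V G hT A hA lam Z hZ
end

section
/- Let T be a balanced tree with k levels (k ≥ 2) and L its graph Laplacian. If f is a stratified function on the vertices with Lf = λf for some real λ and f(root) = 0, then f is identically zero. -/
open scoped Classical

/-!
Induct on the level. If `f` vanishes on the levels up to `n` and `p` is at level `n`, the
eigenvalue equation at `p` reads `deg p * f p - ∑_{w ∼ p} f w = λ * f p`, so the sum of `f` over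
the neighbours of `p` vanishes. The parent of `p` contributes `0`, and each of the children of
`p` contributes the common value of `f` on level `n + 1`; since every vertex of level `n + 1` is
the child of some such `p`, that value is `0`.
-/

open Matrix

namespace SimpleGraph

variable {V : Type*} [Fintype V] [DecidableEq V] (G : SimpleGraph V) [DecidableRel G.Adj]

theorem sum_neighborFinset_eq_zero_of_lapMatrix_mulVec_eq_smul {f : V → ℝ} {lam : ℝ}
    (hf : G.lapMatrix ℝ *ᵥ f = lam • f) {v : V} (hv : f v = 0) :
    ∑ w ∈ G.neighborFinset v, f w = 0 := by
  have hv_eq := congrFun hf v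
  rw [lapMatrix_mulVec_apply, Pi.smul_apply, hv] at hv_eq
  simpa using hv_eq

theorem eq_zero_of_lapMatrix_mulVec_eq_smul_of_graded (level : V → ℕ)
    (hadj : ∀ u v, G.Adj u v → level u = level v + 1 ∨ level v = level u + 1)
    (hdown : ∀ v, level v ≠ 0 → ∃ u, G.Adj u v ∧ level u + 1 = level v)
    {f : V → ℝ} (hf_level : ∀ u v, level u = level v → f u = f v) {lam : ℝ}
    (hf : G.lapMatrix ℝ *ᵥ f = lam • f) (hf_zero : ∀ v, level v = 0 → f v = 0) :
    f = 0 := by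
  suffices h : ∀ n v, level v ≤ n → f v = 0 from funext fun v => h (level v) v le_rfl
  intro n
  induction n with
  | zero => exact fun v hv => hf_zero v (Nat.le_zero.mp hv)
  | succ n ih =>
    intro v hv
    rcases Nat.lt_or_ge (level v) (n + 1) with hlt | hge
    · exact ih v (Nat.lt_succ_iff.mp hlt)
    obtain ⟨p, hpv, hp⟩ := hdown v (by omega)
    have hsum := G.sum_neighborFinset_eq_zero_of_lapMatrix_mulVec_eq_smul hf (ih p (by omega))
    have hchildren : ∀ w ∈ G.neighborFinset p, f w ≠ 0 → level w = level v := by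
      intro w hw hfw
      rcases hadj p w ((mem_neighborFinset G p w).mp hw) with hlow | hhigh
      · exact absurd (ih w (by omega)) hfw
      · omega
    have hv_mem : v ∈ (G.neighborFinset p).filter (level · = level v) :=
      Finset.mem_filter.mpr ⟨(mem_neighborFinset G p v).mpr hpv, rfl⟩
    rw [← Finset.sum_filter_of_ne hchildren,
      Finset.sum_congr rfl fun w hw => hf_level w v (Finset.mem_filter.mp hw).2,
      Finset.sum_const] at hsum
    exact (smul_eq_zero.mp hsum).resolve_left (Finset.card_ne_zero_of_mem hv_mem)

end SimpleGraph

theorem btGraph_adj_level {k : ℕ} {c : ℕ → ℕ} {u v : BTVert k c} (h : (btGraph k c).Adj u v) :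
    u.1.val = v.1.val + 1 ∨ v.1.val = u.1.val + 1 := by
  rcases h with ⟨h, -⟩ | ⟨h, -⟩ <;> omega

theorem exists_isParentOf {k : ℕ} {c : ℕ → ℕ} (v : BTVert k c) (hv : v.1.val ≠ 0) :
    ∃ p : BTVert k c, IsParentOf p v :=
  ⟨⟨⟨v.1.val - 1, by omega⟩, fun i => v.2 ⟨i.val, by have := i.isLt; dsimp at this; omega⟩⟩,
    by simp only; omega, fun _ => rfl⟩

/-- a stratified Laplacian eigenfunction vanishing at the root is identically
zero. -/
theorem stratified_eigenfunction_vanishing_at_root (k : ℕ) (hk : 2 ≤ k) (c : ℕ → ℕ)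
    (lam : ℝ) (f : BTVert k c → ℝ) (hstrat : Stratified f)
    (hf : ((btGraph k c).lapMatrix ℝ).mulVec f = lam • f)
    (hroot : f (btRoot k c (by omega)) = 0) :
    f = 0 := by
  refine (btGraph k c).eq_zero_of_lapMatrix_mulVec_eq_smul_of_graded (fun v => v.1.val)
    (fun _ _ => btGraph_adj_level) (fun v hv => ?_) (fun u v h => hstrat u v (Fin.ext h)) hf
    (fun v hv => hroot ▸ hstrat v _ (Fin.ext hv))
  obtain ⟨p, hp⟩ := exists_isParentOf v hv
  exact ⟨p, Or.inl hp, hp.1⟩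
end

section
/- Let T be a balanced tree with k levels (k ≥ 2), L its graph Laplacian, and λ an eigenvalue of L. Let Z be the set of vertices at which every eigenvector of L with eigenvalue λ vanishes. Then Z is a union of full levels: if u ∈ Z and w is a vertex at the same level as u, then w ∈ Z. -/
open scoped Classical

/-! A vertex `a` is sent to any vertex `b` on its level by a tree automorphism: at each depth
`i`, below the ancestor of `a` at level `i`, swap the children labelled `aᵢ` and `bᵢ`.
Such a relabelling is determined level by level, so it is injective and preserves the parent
relation. Automorphisms commute with the Laplacian, so precomposing a `λ`-eigenvector with one
gives another, and the common zero set of the eigenvectors is invariant. -/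

open Matrix

namespace SimpleGraph.Iso

variable {V W : Type*} [Fintype V] [Fintype W] [DecidableEq V] [DecidableEq W]
  {G : SimpleGraph V} {H : SimpleGraph W} [DecidableRel G.Adj] [DecidableRel H.Adj]

theorem submatrix_lapMatrix (R : Type*) [AddGroupWithOne R] (φ : G ≃g H) :
    (H.lapMatrix R).submatrix φ φ = G.lapMatrix R := by
  ext u v
  simp [lapMatrix, degMatrix, diagonal_apply, φ.degree_eq, φ.injective.eq_iff, φ.map_adj_iff]

theorem lapMatrix_mulVec_comp {R : Type*} [Ring R] (φ : G ≃g H) (x : W → R) :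
    G.lapMatrix R *ᵥ (x ∘ φ) = (H.lapMatrix R *ᵥ x) ∘ φ := by
  rw [← φ.submatrix_lapMatrix R]
  have hx : (x ∘ φ) ∘ φ.toEquiv.symm = x := funext fun w => congrArg x (φ.apply_symm_apply w)
  simpa [hx] using submatrix_mulVec_equiv (H.lapMatrix R) (x ∘ φ) φ φ.toEquiv

theorem apply_eq_zero_of_forall_eigenvector {R : Type*} [Ring R] (φ : G ≃g H) {lam : R} {u : V}
    (hu : ∀ x : V → R, x ≠ 0 → G.lapMatrix R *ᵥ x = lam • x → x u = 0)
    (x : W → R) (hx : x ≠ 0) (hlam : H.lapMatrix R *ᵥ x = lam • x) : x (φ u) = 0 := by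
  refine hu (x ∘ φ) (fun h => hx ?_) ?_
  · simpa [Function.comp_assoc] using congrArg (· ∘ φ.symm) h
  · rw [φ.lapMatrix_mulVec_comp, hlam]
    rfl

end SimpleGraph.Iso

namespace BTVert

variable {k : ℕ} {c : ℕ → ℕ}

def restrict (v : BTVert k c) {i : ℕ} (h : i ≤ v.1) : ∀ j : Fin i, Fin (c j) :=
  fun j => v.2 (Fin.castLE h j)

theorem ext {x y : BTVert k c} (h : x.1 = y.1)
    (hxy : ∀ i (hx : i < x.1.val) (hy : i < y.1.val), x.2 ⟨i, hx⟩ = y.2 ⟨i, hy⟩) : x = y := by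
  obtain ⟨l, a⟩ := x
  obtain ⟨l', b⟩ := y
  subst h
  congr
  exact funext fun i => hxy i i.isLt i.isLt

theorem restrict_congr {x y : BTVert k c} (h : x = y) {i : ℕ} (hx : i ≤ x.1) (hy : i ≤ y.1) :
    x.restrict hx = y.restrict hy := by
  subst h
  rfl

theorem restrict_succ_eq_iff {x y : BTVert k c} {i : ℕ} (hx : i < x.1) (hy : i < y.1) :
    x.restrict hx = y.restrict hy ↔
      x.restrict hx.le = y.restrict hy.le ∧ x.2 ⟨i, hx⟩ = y.2 ⟨i, hy⟩ := by
  simp only [funext_iff, Fin.forall_fin_succ', restrict]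
  rfl

theorem isParentOf_iff {p v : BTVert k c} :
    IsParentOf p v ↔ ∃ h : p.1.val + 1 = v.1.val, v.restrict (i := p.1) (by omega) = p.2 := by
  simp only [IsParentOf, funext_iff]
  rfl

abbrev relabel (π : ∀ i : ℕ, (∀ j : Fin i, Fin (c j)) → Equiv.Perm (Fin (c i)))
    (v : BTVert k c) : BTVert k c :=
  ⟨v.1, fun i => π i (v.restrict i.isLt.le) (v.2 i)⟩

section

variable (π : ∀ i : ℕ, (∀ j : Fin i, Fin (c j)) → Equiv.Perm (Fin (c i)))

theorem restrict_relabel_eq_iff {x y : BTVert k c} {i : ℕ} (hx : i ≤ x.1) (hy : i ≤ y.1) :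
    (relabel π x).restrict hx = (relabel π y).restrict hy ↔ x.restrict hx = y.restrict hy := by
  induction i with
  | zero => simp [funext_iff]
  | succ i ih =>
    rw [restrict_succ_eq_iff (x := relabel π x) (y := relabel π y) hx hy,
      restrict_succ_eq_iff hx hy, ih]
    refine and_congr_right fun h => ?_
    simp only [relabel, h, Equiv.apply_eq_iff_eq]

theorem relabel_injective : Function.Injective (relabel (k := k) π) := by
  intro x y h
  have hlev : (relabel π x).1 = (relabel π y).1 := congrArg Sigma.fst h
  have hres := (restrict_relabel_eq_iff π (x := x) (y := y) le_rfl (congrArg Fin.val hlev).le).1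
    (restrict_congr h _ _)
  exact ext hlev fun i hx _ => congrFun hres ⟨i, hx⟩

theorem relabel_isParentOf_iff (p v : BTVert k c) :
    IsParentOf (relabel π p) (relabel π v) ↔ IsParentOf p v := by
  simp only [isParentOf_iff]
  exact exists_congr fun h => restrict_relabel_eq_iff π (x := v) (y := p) _ le_rfl

noncomputable def relabelIso : btGraph k c ≃g btGraph k c where
  toEquiv := Equiv.ofBijective _ (Finite.injective_iff_bijective.mp (relabel_injective π))
  map_rel_iff' := or_congr (relabel_isParentOf_iff π _ _) (relabel_isParentOf_iff π _ _)

end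

def pathSwap {l : ℕ} (a b : ∀ j : Fin l, Fin (c j)) (i : ℕ) (p : ∀ j : Fin i, Fin (c j)) :
    Equiv.Perm (Fin (c i)) :=
  if h : i < l then
    if p = fun j => a (Fin.castLE h.le j) then Equiv.swap (a ⟨i, h⟩) (b ⟨i, h⟩) else 1
  else 1

theorem relabel_pathSwap (l : Fin k) (a b : ∀ j : Fin l.val, Fin (c j)) :
    relabel (pathSwap a b) ⟨l, a⟩ = ⟨l, b⟩ := by
  refine ext rfl fun i hi _ => ?_
  have hpre : restrict (k := k) ⟨l, a⟩ hi.le = fun j => a (Fin.castLE hi.le j) := rfl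
  simp only [relabel, pathSwap, dif_pos hi, hpre, if_true]
  exact Equiv.swap_apply_left _ _

theorem exists_iso_apply_eq_of_level_eq {u w : BTVert k c} (h : u.1 = w.1) :
    ∃ φ : btGraph k c ≃g btGraph k c, φ u = w := by
  obtain ⟨l, a⟩ := u
  obtain ⟨l', b⟩ := w
  obtain rfl : l = l' := h
  exact ⟨relabelIso (pathSwap a b), relabel_pathSwap l a b⟩

end BTVert

theorem common_vanishing_set_is_union_of_levels_general (k : ℕ) (c : ℕ → ℕ)
    (lam : ℝ) (u w : BTVert k c)
    (hu : ∀ f : BTVert k c → ℝ, f ≠ 0 →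
      ((btGraph k c).lapMatrix ℝ).mulVec f = lam • f → f u = 0)
    (huw : u.1 = w.1) :
    ∀ f : BTVert k c → ℝ, f ≠ 0 →
      ((btGraph k c).lapMatrix ℝ).mulVec f = lam • f → f w = 0 := by
  obtain ⟨φ, rfl⟩ := BTVert.exists_iso_apply_eq_of_level_eq huw
  exact φ.apply_eq_zero_of_forall_eigenvector hu

/-- the set of common vanishing vertices of the `λ`-eigenfunctions of the
Laplacian of a balanced tree is a union of full levels. -/
theorem common_vanishing_set_is_union_of_levels (k : ℕ) (hk : 2 ≤ k) (c : ℕ → ℕ)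
    (hc : ∀ l, l ≤ k - 2 → 1 ≤ c l) (lam : ℝ)
    (hlam : IsEigenvalue ((btGraph k c).lapMatrix ℝ) lam) (u w : BTVert k c)
    (hu : ∀ f : BTVert k c → ℝ, f ≠ 0 →
      ((btGraph k c).lapMatrix ℝ).mulVec f = lam • f → f u = 0)
    (huw : u.1 = w.1) :
    ∀ f : BTVert k c → ℝ, f ≠ 0 →
      ((btGraph k c).lapMatrix ℝ).mulVec f = lam • f → f w = 0 :=
  common_vanishing_set_is_union_of_levels_general k c lam u w hu huw
end
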